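/- arXiv:2010.14636 — 6 statements merged into one kernel-verified Lean document; each statement's English description precedes it below -/
import Mathlib

section
/- Let λ be a partition with conjugate λ'. For i ∈ N, the up-operator u_i sends λ to the partition obtained by adding a box to column i if the result is a partition, and to 0 otherwise; the down-operator d_i removes a box from column i similarly. Then for any word x in Γ (acting right to left, with barred letters acting as down-operators), u_x(λ) ≠ 0 if and only if λ'_i − λ'_{i+1} ≥ α_i(x) for all i, and in that case u_x(λ) is the partition whose conjugate is (λ'_1 + w_1(x), λ'_2 + w_2(x), ...). -/
/-- Alphabet Γ = ℕ ∪ ℕ̄ : a letter is `(false, i)` for unbarred `i` (up-operator)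
and `(true, i)` for barred `ī` (down-operator); indices of interest are `i ≥ 1`. -/
abbrev Γ : Type := Bool × ℕ

/-- `c : ℕ → ℕ` records the column lengths `λ'_i` (for `i ≥ 1`) of a partition:
nonincreasing, eventually zero; `c 0 = 0` is a normalization. -/
def IsPartition (c : ℕ → ℕ) : Prop :=
  (∀ i, 1 ≤ i → c (i + 1) ≤ c i) ∧ c 0 = 0 ∧ ∃ N, ∀ i, N ≤ i → c i = 0

open scoped Classical in
/-- The up-operator `u_i`: add a box to column `i` if the result is a partition, else `0` (`none`). -/
noncomputable def upFun (i : ℕ) (c : ℕ → ℕ) : Option (ℕ → ℕ) :=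
  if 1 ≤ i ∧ IsPartition (Function.update c i (c i + 1)) then
    some (Function.update c i (c i + 1)) else none

open scoped Classical in
/-- The down-operator `d_i`: remove a box from column `i` if the result is a partition, else `0`. -/
noncomputable def downFun (i : ℕ) (c : ℕ → ℕ) : Option (ℕ → ℕ) :=
  if 1 ≤ i ∧ 1 ≤ c i ∧ IsPartition (Function.update c i (c i - 1)) then
    some (Function.update c i (c i - 1)) else none

/-- `u_i` extended to `0` (operators applied to `0` give `0`). -/
noncomputable def U (i : ℕ) (o : Option (ℕ → ℕ)) : Option (ℕ → ℕ) := o.bind (upFun i)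

/-- `d_i` extended to `0`. -/
noncomputable def D (i : ℕ) (o : Option (ℕ → ℕ)) : Option (ℕ → ℕ) := o.bind (downFun i)

/-- The action `u_x` of a word `x` on (possibly zero) partitions, rightmost letter acting first. -/
noncomputable def act (x : List Γ) (o : Option (ℕ → ℕ)) : Option (ℕ → ℕ) :=
  x.foldr (fun l o => if l.1 then D l.2 o else U l.2 o) o

/-- The weight `w_j(x)`: occurrences of `j` minus occurrences of `j̄` in `x`. -/
def wt (j : ℕ) (x : List Γ) : ℤ :=
  (x.count ((false, j) : Γ) : ℤ) - (x.count ((true, j) : Γ) : ℤ)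

/-- `α_i(x)`: the maximum of `w_{i+1}(x̃) - w_i(x̃)` over all suffix subwords `x̃` of `x`
(including the empty suffix, which contributes `0`). -/
def alphaV (i : ℕ) (x : List Γ) : ℤ :=
  (x.tails.map (fun s => wt (i + 1) s - wt i s)).foldr max 0

/-!
Each letter moves one column length by `±1`, so if `u_s(λ)` is defined for a suffix `s` of `x`,
its conjugate is `λ' + w(s)`. As `u_s(λ)` is a partition, a further letter `l` succeeds exactly
when the integer vector `λ' + w(l s)` is still weakly decreasing: removing a box from an empty
column would make that column `-1`. Hence `u_x(λ) ≠ 0` iff `λ' + w(s)` is weakly decreasing for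
every suffix `s`, and that is the inequality `w_{i+1}(s) - w_i(s) ≤ λ'_i - λ'_{i+1}`
defining `α_i(x)`.
-/

def shape (c : ℕ → ℕ) (x : List Γ) (i : ℕ) : ℤ := c i + wt i x

def ColumnsDecreasing (t : ℕ → ℤ) : Prop := ∀ i, 1 ≤ i → t (i + 1) ≤ t i

noncomputable def letterFun (l : Γ) : (ℕ → ℕ) → Option (ℕ → ℕ) :=
  if l.1 then downFun l.2 else upFun l.2

lemma act_cons (l : Γ) (x : List Γ) (o : Option (ℕ → ℕ)) :
    act (l :: x) o = (act x o).bind (letterFun l) := by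
  cases h : l.1 <;> simp [act, letterFun, h, U, D]

lemma wt_cons (i : ℕ) (l : Γ) (x : List Γ) : wt i (l :: x) = wt i [l] + wt i x := by
  simp only [wt, List.count_cons, List.count_nil]
  push_cast
  ring

lemma shape_nil (c : ℕ → ℕ) (i : ℕ) : shape c [] i = c i := by
  simp [shape, wt]

lemma shape_cons {c c' : ℕ → ℕ} {x : List Γ} (h : ∀ i, (c' i : ℤ) = shape c x i) (l : Γ) :
    shape c' [l] = shape c (l :: x) := by
  ext i
  rw [shape, h, shape, shape, wt_cons i l x]
  ring

lemma shape_up (c : ℕ → ℕ) (j : ℕ) :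
    shape c [(false, j)] = fun i => (Function.update c j (c j + 1) i : ℤ) := by
  ext i
  rcases eq_or_ne i j with rfl | h
  · simp [shape, wt]
  · simp [shape, wt, h, Ne.symm h]

lemma shape_down {c : ℕ → ℕ} {j : ℕ} (hj : 1 ≤ c j) :
    shape c [(true, j)] = fun i => (Function.update c j (c j - 1) i : ℤ) := by
  ext i
  rcases eq_or_ne i j with rfl | h
  · simp [shape, wt]; omega
  · simp [shape, wt, h, Ne.symm h]

lemma isPartition_update_iff {c : ℕ → ℕ} (hc : IsPartition c) {j : ℕ} (hj : 1 ≤ j) (n : ℕ) :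
    IsPartition (Function.update c j n) ↔
      ∀ i, 1 ≤ i → Function.update c j n (i + 1) ≤ Function.update c j n i := by
  refine ⟨fun h => h.1, fun h => ⟨h, ?_, ?_⟩⟩
  · rw [Function.update_of_ne (by omega)]
    exact hc.2.1
  · obtain ⟨N, hN⟩ := hc.2.2
    refine ⟨max N (j + 1), fun i hi => ?_⟩
    rw [Function.update_of_ne (by omega)]
    exact hN i (by omega)

lemma columnsDecreasing_cast_iff (f : ℕ → ℕ) :
    ColumnsDecreasing (fun i => (f i : ℤ)) ↔ ∀ i, 1 ≤ i → f (i + 1) ≤ f i := by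
  simp only [ColumnsDecreasing, Nat.cast_le]

lemma isPartition_of_letterFun_eq_some {l : Γ} {c c' : ℕ → ℕ} (h : letterFun l c = some c') :
    IsPartition c' := by
  obtain ⟨_ | _, j⟩ := l <;>
    simp only [letterFun, Bool.false_eq_true, ↓reduceIte, upFun, downFun] at h <;>
    split_ifs at h with hp <;> cases h
  · exact hp.2
  · exact hp.2.2

lemma letterFun_shape {l : Γ} {c c' : ℕ → ℕ} (h : letterFun l c = some c') :
    ∀ i, (c' i : ℤ) = shape c [l] i := by
  obtain ⟨_ | _, j⟩ := l <;>
    simp only [letterFun, Bool.false_eq_true, ↓reduceIte, upFun, downFun] at h <;>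
    split_ifs at h with hp <;> cases h
  · simp [shape_up]
  · simp [shape_down hp.2.1]

lemma letterFun_isSome_iff {l : Γ} (hl : 1 ≤ l.2) {c : ℕ → ℕ} (hc : IsPartition c) :
    (letterFun l c).isSome ↔ ColumnsDecreasing (shape c [l]) := by
  obtain ⟨_ | _, j⟩ := l
  · simp [letterFun, upFun, hl, shape_up, columnsDecreasing_cast_iff, isPartition_update_iff hc hl]
  · by_cases hj : 1 ≤ c j
    · simp [letterFun, downFun, hl, hj, shape_down hj, columnsDecreasing_cast_iff,
        isPartition_update_iff hc hl]
    · have hfalse : ¬ ColumnsDecreasing (shape c [(true, j)]) := fun h => by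
        have := h j hl
        simp [shape, wt] at this
        omega
      simp [letterFun, downFun, hj, hfalse]

lemma act_shape {x : List Γ} {c c' : ℕ → ℕ} (h : act x (some c) = some c') :
    ∀ i, (c' i : ℤ) = shape c x i := by
  induction x generalizing c' with
  | nil => cases h; exact fun i => (shape_nil c i).symm
  | cons l x ih =>
    rw [act_cons, Option.bind_eq_some_iff] at h
    obtain ⟨c'', hx, hl⟩ := h
    rw [← shape_cons (ih hx)]
    exact letterFun_shape hl

lemma isPartition_act {x : List Γ} {c c' : ℕ → ℕ} (hc : IsPartition c)
    (h : act x (some c) = some c') : IsPartition c' := by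
  cases x with
  | nil => cases h; exact hc
  | cons l x =>
    rw [act_cons, Option.bind_eq_some_iff] at h
    exact isPartition_of_letterFun_eq_some h.choose_spec.2

lemma act_isSome_iff {x : List Γ} (hx : ∀ l ∈ x, 1 ≤ l.2) {c : ℕ → ℕ} (hc : IsPartition c) :
    (act x (some c)).isSome ↔ ∀ s ∈ x.tails, ColumnsDecreasing (shape c s) := by
  induction x with
  | nil =>
    simpa [act, ColumnsDecreasing, shape_nil] using hc.1
  | cons l x ih =>
    have ih := ih fun m hm => hx m (List.mem_cons_of_mem l hm)
    rw [act_cons, List.tails_cons, List.forall_mem_cons]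
    cases h : act x (some c) with
    | none => simp_all
    | some c' =>
      simp only [h, Option.isSome_some, true_iff] at ih
      rw [Option.bind_some, letterFun_isSome_iff (hx l List.mem_cons_self) (isPartition_act hc h),
        shape_cons (act_shape h)]
      exact (and_iff_left ih).symm

lemma alphaV_le_iff (i : ℕ) (x : List Γ) (d : ℤ) :
    alphaV i x ≤ d ↔ ∀ s ∈ x.tails, wt (i + 1) s - wt i s ≤ d := by
  induction x with
  | nil => simp [alphaV, wt]
  | cons l x ih =>
    rw [List.tails_cons, List.forall_mem_cons, ← ih]
    simp [alphaV]

lemma forall_alphaV_le_iff (x : List Γ) (c : ℕ → ℕ) :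
    (∀ i, 1 ≤ i → alphaV i x ≤ (c i : ℤ) - (c (i + 1) : ℤ)) ↔
      ∀ s ∈ x.tails, ColumnsDecreasing (shape c s) := by
  simp only [alphaV_le_iff, ColumnsDecreasing, shape]
  exact ⟨fun h s hs i hi => by linarith [h i hi s hs], fun h i hi s hs => by linarith [h s hs i hi]⟩

theorem operator_action (x : List Γ) (hx : ∀ l ∈ x, 1 ≤ l.2)
    (c : ℕ → ℕ) (hc : IsPartition c) :
    (act x (some c) ≠ none ↔
      ∀ i, 1 ≤ i → alphaV i x ≤ (c i : ℤ) - (c (i + 1) : ℤ)) ∧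
    ((∀ i, 1 ≤ i → alphaV i x ≤ (c i : ℤ) - (c (i + 1) : ℤ)) →
      ∃ c' : ℕ → ℕ, act x (some c) = some c' ∧
        ∀ i, 1 ≤ i → (c' i : ℤ) = (c i : ℤ) + wt i x) := by
  have key : act x (some c) ≠ none ↔ ∀ i, 1 ≤ i → alphaV i x ≤ (c i : ℤ) - (c (i + 1) : ℤ) := by
    rw [Option.ne_none_iff_isSome, act_isSome_iff hx hc, forall_alphaV_le_iff]
  refine ⟨key, fun h => ?_⟩
  obtain ⟨c', hc'⟩ := Option.ne_none_iff_exists'.mp (key.mpr h)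
  exact ⟨c', hc', fun i _ => act_shape hc' i⟩
end

section
/- Two words x and y in the alphabet Γ induce the same operator on the set of partitions (i.e., u_x(λ) = u_y(λ) for every partition λ, where both may be 0) if and only if α(x) = α(y) and w(x) = w(y). -/
/-!
Say that `x` is admissible for `λ` if `α_i(x) ≤ λ'_i - λ'_{i+1}` for all `i ≥ 1`. Reading `x`
from the right, after a suffix `x̃` the current column vector is `λ' + w(x̃)`, whose `i`-th gap is
`λ'_i - λ'_{i+1} - (w_{i+1}(x̃) - w_i(x̃))`, and the next letter is nonzero exactly when the one
gap it decreases stays nonnegative. Hence `u_x λ ≠ 0` iff `x` is admissible for `λ`, and then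
`u_x λ = λ' + w(x)`; so `α` and `w` determine the operator. Conversely, the partition `λ` whose
gaps are exactly `α(x)` is admissible for `x`, so `u_y λ = u_x λ ≠ 0` and `y` is admissible for `λ`
too, giving `α(y) ≤ α(x)`; comparing `u_x λ = u_y λ` gives `w(x) = w(y)`.
-/

open Function

def gap (c : ℕ → ℕ) (i : ℕ) : ℤ := (c i : ℤ) - c (i + 1)

def Admissible (x : List Γ) (c : ℕ → ℕ) : Prop := ∀ i, 1 ≤ i → alphaV i x ≤ gap c i

@[simp]
lemma wt_nil (j : ℕ) : wt j [] = 0 := by simp [wt]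

lemma wt_cons_s2 (j : ℕ) (b : Bool) (k : ℕ) (x : List Γ) :
    wt j ((b, k) :: x) = wt j x + if k = j then (if b then -1 else 1) else 0 := by
  by_cases hk : k = j <;> cases b <;> simp [wt, hk] <;> ring

lemma wt_eq_zero_of_forall_ne {j : ℕ} {x : List Γ} (h : ∀ l ∈ x, l.2 ≠ j) : wt j x = 0 := by
  have hu : ((false, j) : Γ) ∉ x := fun hm => h _ hm rfl
  have hd : ((true, j) : Γ) ∉ x := fun hm => h _ hm rfl
  simp [wt, List.count_eq_zero_of_not_mem hu, List.count_eq_zero_of_not_mem hd]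

@[simp]
lemma alphaV_nil (i : ℕ) : alphaV i [] = 0 := by simp [alphaV]

@[simp]
lemma alphaV_cons (i : ℕ) (l : Γ) (x : List Γ) :
    alphaV i (l :: x) = max (wt (i + 1) (l :: x) - wt i (l :: x)) (alphaV i x) := by
  simp [alphaV]

lemma alphaV_nonneg (i : ℕ) (x : List Γ) : 0 ≤ alphaV i x := by
  induction x with
  | nil => simp
  | cons l x ih => simp [ih]

lemma sub_le_alphaV (i : ℕ) (x : List Γ) : wt (i + 1) x - wt i x ≤ alphaV i x := by
  cases x with
  | nil => simp
  | cons l x => simp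

lemma alphaV_eq_zero_of_forall_lt {i : ℕ} {x : List Γ} (h : ∀ l ∈ x, l.2 < i) :
    alphaV i x = 0 := by
  induction x with
  | nil => simp
  | cons l x ih =>
    rw [alphaV_cons, ih fun m hm => h m (List.mem_cons_of_mem _ hm),
      wt_eq_zero_of_forall_ne fun m hm => (h m hm).ne,
      wt_eq_zero_of_forall_ne fun m hm => by have := h m hm; omega]
    simp

lemma IsPartition.update_iff {c : ℕ → ℕ} (hc : IsPartition c) (p v : ℕ) :
    IsPartition (update c (p + 1) v) ↔ c (p + 1 + 1) ≤ v ∧ (p = 0 ∨ v ≤ c p) := by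
  obtain ⟨hanti, hzero, N, hN⟩ := hc
  constructor
  · rintro ⟨hanti', -, -⟩
    have hp1 := hanti' (p + 1) (by omega)
    simp only [update_self, update_of_ne (show p + 1 + 1 ≠ p + 1 by omega)] at hp1
    refine ⟨hp1, ?_⟩
    rcases Nat.eq_zero_or_pos p with hp | hp
    · exact Or.inl hp
    · have hp0 := hanti' p hp
      simpa [update_of_ne (show p ≠ p + 1 by omega)] using Or.inr hp0
  · rintro ⟨hnext, hprev⟩
    refine ⟨fun i hi => ?_, by simpa [update_of_ne (show 0 ≠ p + 1 by omega)], max N (p + 1 + 1),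
      fun i hi => by rw [update_of_ne (by omega)]; exact hN i (by omega)⟩
    have := hanti i hi
    rcases eq_or_ne i (p + 1) with rfl | hip
    · simpa [update_of_ne (show p + 1 + 1 ≠ p + 1 by omega)] using hnext
    rcases eq_or_ne i p with rfl | hip'
    · simp only [update_self, update_of_ne hip]; omega
    · rw [update_of_ne (by omega), update_of_ne hip]; exact this

lemma upFun_eq {c : ℕ → ℕ} (hc : IsPartition c) (p : ℕ) :
    upFun (p + 1) c =
      if p = 0 ∨ c (p + 1) < c p then some (update c (p + 1) (c (p + 1) + 1)) else none := by
  have hnext := hc.1 (p + 1) (by omega)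
  simp only [upFun, hc.update_iff, le_add_right hnext, true_and, Nat.add_one_le_iff]
  simp

lemma downFun_eq {c : ℕ → ℕ} (hc : IsPartition c) (p : ℕ) :
    downFun (p + 1) c =
      if c (p + 1 + 1) < c (p + 1) then some (update c (p + 1) (c (p + 1) - 1)) else none := by
  simp only [downFun, hc.update_iff]
  by_cases h : c (p + 1 + 1) < c (p + 1)
  · have hprev : p = 0 ∨ c (p + 1) - 1 ≤ c p := by
      rcases Nat.eq_zero_or_pos p with hp | hp
      · exact Or.inl hp
      · exact Or.inr (by have := hc.1 p hp; omega)
    rw [if_pos ⟨by omega, by omega, by omega, hprev⟩, if_pos h]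
  · rw [if_neg (by omega), if_neg h]

lemma isPartition_of_upFun_eq_some {j : ℕ} {c c' : ℕ → ℕ} (h : upFun j c = some c') :
    IsPartition c' := by
  unfold upFun at h
  split_ifs at h with hc
  exact Option.some_injective _ h ▸ hc.2

lemma isPartition_of_downFun_eq_some {j : ℕ} {c c' : ℕ → ℕ} (h : downFun j c = some c') :
    IsPartition c' := by
  unfold downFun at h
  split_ifs at h with hc
  exact Option.some_injective _ h ▸ hc.2.2

lemma admissible_nil {c : ℕ → ℕ} (hc : IsPartition c) : Admissible [] c := by
  intro i hi
  have := hc.1 i hi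
  simp only [alphaV_nil, gap]
  omega

lemma admissible_cons_iff {l : Γ} {x : List Γ} {c : ℕ → ℕ} :
    Admissible (l :: x) c ↔
      Admissible x c ∧ ∀ i, 1 ≤ i → wt (i + 1) (l :: x) - wt i (l :: x) ≤ gap c i := by
  simp only [Admissible, alphaV_cons, max_le_iff]
  exact ⟨fun h => ⟨fun i hi => (h i hi).2, fun i hi => (h i hi).1⟩,
    fun h i hi => ⟨h.2 i hi, h.1 i hi⟩⟩

lemma admissible_cons_up_iff {p : ℕ} {x : List Γ} {c : ℕ → ℕ} :
    Admissible ((false, p + 1) :: x) c ↔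
      Admissible x c ∧ (p = 0 ∨ wt (p + 1) x - wt p x < gap c p) := by
  rw [admissible_cons_iff]
  refine and_congr_right fun hx => ⟨fun h => ?_, fun h i hi => ?_⟩
  · rcases Nat.eq_zero_or_pos p with hp | hp
    · exact Or.inl hp
    · have := h p hp
      simp only [wt_cons_s2, ↓reduceIte, Bool.false_eq_true, Nat.add_eq_left,
        one_ne_zero, add_zero, tsub_le_iff_right, Order.add_one_le_iff] at this
      omega
  · have := sub_le_alphaV i x
    have := hx i hi
    simp only [wt_cons_s2, Nat.add_right_cancel_iff, Bool.false_eq_true, ↓reduceIte, tsub_le_iff_right,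
      ge_iff_le]
    split_ifs <;> subst_vars <;> omega

lemma admissible_cons_down_iff {p : ℕ} {x : List Γ} {c : ℕ → ℕ} :
    Admissible ((true, p + 1) :: x) c ↔
      Admissible x c ∧ wt (p + 1 + 1) x - wt (p + 1) x < gap c (p + 1) := by
  rw [admissible_cons_iff]
  refine and_congr_right fun hx => ⟨fun h => ?_, fun h i hi => ?_⟩
  · have := h (p + 1) (by omega)
    simp only [wt_cons_s2, Nat.left_eq_add, one_ne_zero, ↓reduceIte, add_zero,
      Int.reduceNeg, tsub_le_iff_right] at this
    omega
  · have := sub_le_alphaV i x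
    have := hx i hi
    simp only [wt_cons_s2, Nat.add_right_cancel_iff, ↓reduceIte, Int.reduceNeg, tsub_le_iff_right,
      ge_iff_le]
    split_ifs <;> subst_vars <;> omega

section OneLetter

variable {x : List Γ} {c c' : ℕ → ℕ}

lemma exists_upFun_eq_some {p : ℕ} (hc' : IsPartition c')
    (hval : ∀ i, (c' i : ℤ) = c i + wt i x)
    (h : p = 0 ∨ wt (p + 1) x - wt p x < gap c p) :
    ∃ c'', upFun (p + 1) c' = some c'' ∧ IsPartition c'' ∧
      ∀ i, (c'' i : ℤ) = c i + wt i ((false, p + 1) :: x) := by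
  have hlt : p = 0 ∨ c' (p + 1) < c' p := by
    have := hval p; have := hval (p + 1); simp only [gap] at h; omega
  have hup : upFun (p + 1) c' = some (update c' (p + 1) (c' (p + 1) + 1)) := by
    rw [upFun_eq hc', if_pos hlt]
  refine ⟨_, hup, isPartition_of_upFun_eq_some hup, fun i => ?_⟩
  rcases eq_or_ne i (p + 1) with rfl | hi
  · simp only [update_self, Nat.cast_add, hval, Nat.cast_one, wt_cons_s2,
      ↓reduceIte, Bool.false_eq_true]
    ring
  · simp [update_of_ne hi, wt_cons_s2, hval, Ne.symm hi]

lemma upFun_eq_none_of_not {p : ℕ} (hc' : IsPartition c')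
    (hval : ∀ i, (c' i : ℤ) = c i + wt i x)
    (h : ¬ (p = 0 ∨ wt (p + 1) x - wt p x < gap c p)) :
    upFun (p + 1) c' = none := by
  have hlt : ¬ (p = 0 ∨ c' (p + 1) < c' p) := by
    have := hval p; have := hval (p + 1); simp only [gap] at h; omega
  rw [upFun_eq hc', if_neg hlt]

lemma exists_downFun_eq_some {p : ℕ} (hc' : IsPartition c')
    (hval : ∀ i, (c' i : ℤ) = c i + wt i x)
    (h : wt (p + 1 + 1) x - wt (p + 1) x < gap c (p + 1)) :
    ∃ c'', downFun (p + 1) c' = some c'' ∧ IsPartition c'' ∧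
      ∀ i, (c'' i : ℤ) = c i + wt i ((true, p + 1) :: x) := by
  have hlt : c' (p + 1 + 1) < c' (p + 1) := by
    have := hval (p + 1); have := hval (p + 1 + 1); simp only [gap] at h; omega
  have hdown : downFun (p + 1) c' = some (update c' (p + 1) (c' (p + 1) - 1)) := by
    rw [downFun_eq hc', if_pos hlt]
  refine ⟨_, hdown, isPartition_of_downFun_eq_some hdown, fun i => ?_⟩
  rcases eq_or_ne i (p + 1) with rfl | hi
  · have := hval (p + 1)
    simp only [update_self, wt_cons_s2, ↓reduceIte, Int.reduceNeg]
    omega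
  · simp [update_of_ne hi, wt_cons_s2, hval, Ne.symm hi]

lemma downFun_eq_none_of_not {p : ℕ} (hc' : IsPartition c')
    (hval : ∀ i, (c' i : ℤ) = c i + wt i x)
    (h : ¬ wt (p + 1 + 1) x - wt (p + 1) x < gap c (p + 1)) :
    downFun (p + 1) c' = none := by
  have hlt : ¬ c' (p + 1 + 1) < c' (p + 1) := by
    have := hval (p + 1); have := hval (p + 1 + 1); simp only [gap] at h; omega
  rw [downFun_eq hc', if_neg hlt]

end OneLetter

lemma act_cons_up (j : ℕ) (x : List Γ) (o : Option (ℕ → ℕ)) :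
    act ((false, j) :: x) o = (act x o).bind (upFun j) := rfl

lemma act_cons_down (j : ℕ) (x : List Γ) (o : Option (ℕ → ℕ)) :
    act ((true, j) :: x) o = (act x o).bind (downFun j) := rfl

lemma exists_pred_of_mem_cons {b : Bool} {j : ℕ} {x : List Γ} (hx : ∀ l ∈ (b, j) :: x, 1 ≤ l.2) :
    ∃ p, j = p + 1 :=
  ⟨j - 1, by have := hx _ List.mem_cons_self; simp only at this; omega⟩

theorem exists_act_eq_some {x : List Γ} (hx : ∀ l ∈ x, 1 ≤ l.2) {c : ℕ → ℕ} (hc : IsPartition c)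
    (h : Admissible x c) :
    ∃ c', act x (some c) = some c' ∧ IsPartition c' ∧ ∀ i, (c' i : ℤ) = c i + wt i x := by
  induction x with
  | nil => exact ⟨c, rfl, hc, by simp⟩
  | cons l x ih =>
    obtain ⟨b, j⟩ := l
    obtain ⟨p, rfl⟩ := exists_pred_of_mem_cons hx
    have hx' := fun l hl => hx l (List.mem_cons_of_mem _ hl)
    cases b with
    | false =>
      obtain ⟨hxc, hcond⟩ := admissible_cons_up_iff.1 h
      obtain ⟨c', hact, hc', hval⟩ := ih hx' hxc
      rw [act_cons_up, hact, Option.bind_some]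
      exact exists_upFun_eq_some hc' hval hcond
    | true =>
      obtain ⟨hxc, hcond⟩ := admissible_cons_down_iff.1 h
      obtain ⟨c', hact, hc', hval⟩ := ih hx' hxc
      rw [act_cons_down, hact, Option.bind_some]
      exact exists_downFun_eq_some hc' hval hcond

theorem act_eq_none {x : List Γ} (hx : ∀ l ∈ x, 1 ≤ l.2) {c : ℕ → ℕ} (hc : IsPartition c)
    (h : ¬ Admissible x c) : act x (some c) = none := by
  induction x with
  | nil => exact absurd (admissible_nil hc) h
  | cons l x ih =>
    obtain ⟨b, j⟩ := l
    obtain ⟨p, rfl⟩ := exists_pred_of_mem_cons hx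
    have hx' := fun l hl => hx l (List.mem_cons_of_mem _ hl)
    by_cases hxc : Admissible x c
    swap
    · cases b <;> simp [act_cons_up, act_cons_down, ih hx' hxc]
    obtain ⟨c', hact, hc', hval⟩ := exists_act_eq_some hx' hc hxc
    cases b with
    | false =>
      rw [act_cons_up, hact, Option.bind_some]
      exact upFun_eq_none_of_not hc' hval fun hcond => h (admissible_cons_up_iff.2 ⟨hxc, hcond⟩)
    | true =>
      rw [act_cons_down, hact, Option.bind_some]
      exact downFun_eq_none_of_not hc' hval
        fun hcond => h (admissible_cons_down_iff.2 ⟨hxc, hcond⟩)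

lemma admissible_of_act_eq_some {x : List Γ} (hx : ∀ l ∈ x, 1 ≤ l.2) {c c' : ℕ → ℕ}
    (hc : IsPartition c) (h : act x (some c) = some c') : Admissible x c := by
  by_contra hn
  simp [act_eq_none hx hc hn] at h

-- `λ'_j = ∑_{k ≥ j} α_k(x)`, truncated at the largest letter of `x`, beyond which `α_k(x) = 0`.
def minPartition (x : List Γ) (j : ℕ) : ℕ :=
  if j = 0 then 0
  else ∑ k ∈ Finset.Ico j (x.toFinset.sup Prod.snd + 1), (alphaV k x).toNat

lemma alphaV_eq_zero_of_sup_lt {x : List Γ} {j : ℕ} (hj : x.toFinset.sup Prod.snd < j) :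
    alphaV j x = 0 :=
  alphaV_eq_zero_of_forall_lt fun _ hl =>
    (Finset.le_sup (f := Prod.snd) (List.mem_toFinset.2 hl)).trans_lt hj

lemma minPartition_eq_zero {x : List Γ} {j : ℕ} (hj : x.toFinset.sup Prod.snd < j) :
    minPartition x j = 0 := by
  simp [minPartition, Finset.Ico_eq_empty_of_le (show x.toFinset.sup Prod.snd + 1 ≤ j by omega)]

lemma minPartition_eq_add {x : List Γ} {j : ℕ} (hj : 1 ≤ j) :
    minPartition x j = (alphaV j x).toNat + minPartition x (j + 1) := by
  rcases lt_or_ge (x.toFinset.sup Prod.snd) j with hlt | hle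
  · simp [minPartition_eq_zero hlt, minPartition_eq_zero (hlt.trans j.lt_succ_self),
      alphaV_eq_zero_of_sup_lt hlt]
  · simp only [minPartition, if_neg (show j ≠ 0 by omega), if_neg (show j + 1 ≠ 0 by omega)]
    exact Finset.sum_eq_sum_Ico_succ_bot (by omega) _

lemma isPartition_minPartition (x : List Γ) : IsPartition (minPartition x) :=
  ⟨fun i hi => by rw [minPartition_eq_add hi (x := x)]; omega, by simp [minPartition],
    _, fun _ hj => minPartition_eq_zero (Nat.lt_of_succ_le hj)⟩

lemma gap_minPartition (x : List Γ) {j : ℕ} (hj : 1 ≤ j) :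
    gap (minPartition x) j = alphaV j x := by
  rw [gap, minPartition_eq_add hj]
  push_cast
  rw [Int.toNat_of_nonneg (alphaV_nonneg j x)]
  ring

lemma admissible_minPartition (x : List Γ) : Admissible x (minPartition x) :=
  fun _ hi => (gap_minPartition x hi).ge

lemma alphaV_le_of_act_eq {x y : List Γ} (hx : ∀ l ∈ x, 1 ≤ l.2) (hy : ∀ l ∈ y, 1 ≤ l.2)
    (h : ∀ c, IsPartition c → act x (some c) = act y (some c))
    {i : ℕ} (hi : 1 ≤ i) : alphaV i y ≤ alphaV i x := by
  obtain ⟨c', hact, -⟩ :=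
    exists_act_eq_some hx (isPartition_minPartition x) (admissible_minPartition x)
  rw [h _ (isPartition_minPartition x)] at hact
  rw [← gap_minPartition x hi]
  exact admissible_of_act_eq_some hy (isPartition_minPartition x) hact i hi

lemma wt_eq_of_act_eq {x y : List Γ} (hx : ∀ l ∈ x, 1 ≤ l.2) (hy : ∀ l ∈ y, 1 ≤ l.2)
    (h : ∀ c, IsPartition c → act x (some c) = act y (some c)) (i : ℕ) :
    wt i x = wt i y := by
  have hc := isPartition_minPartition x
  obtain ⟨c', hact, -, hval⟩ := exists_act_eq_some hx hc (admissible_minPartition x)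
  rw [h _ hc] at hact
  obtain ⟨c'', hact', -, hval'⟩ := exists_act_eq_some hy hc (admissible_of_act_eq_some hy hc hact)
  obtain rfl : c'' = c' := Option.some_injective _ (hact'.symm.trans hact)
  linarith [hval i, hval' i]

lemma act_eq_of_alphaV_eq_of_wt_eq {x y : List Γ} (hx : ∀ l ∈ x, 1 ≤ l.2)
    (hy : ∀ l ∈ y, 1 ≤ l.2) (hα : ∀ i, 1 ≤ i → alphaV i x = alphaV i y)
    (hw : ∀ i, 1 ≤ i → wt i x = wt i y) {c : ℕ → ℕ} (hc : IsPartition c) :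
    act x (some c) = act y (some c) := by
  have hadm : Admissible x c ↔ Admissible y c :=
    forall₂_congr fun i hi => by rw [hα i hi]
  by_cases h : Admissible x c
  · obtain ⟨cx, hactx, hcx, hvalx⟩ := exists_act_eq_some hx hc h
    obtain ⟨cy, hacty, hcy, hvaly⟩ := exists_act_eq_some hy hc (hadm.1 h)
    rw [hactx, hacty, Option.some_inj]
    funext i
    rcases Nat.eq_zero_or_pos i with rfl | hi
    · rw [hcx.2.1, hcy.2.1]
    · have := hvalx i; have := hvaly i; have := hw i hi; omega
  · rw [act_eq_none hx hc h, act_eq_none hy hc (hadm.not.1 h)]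

theorem same_action_iff (x y : List Γ)
    (hx : ∀ l ∈ x, 1 ≤ l.2) (hy : ∀ l ∈ y, 1 ≤ l.2) :
    (∀ c : ℕ → ℕ, IsPartition c → act x (some c) = act y (some c)) ↔
      (∀ i, 1 ≤ i → alphaV i x = alphaV i y ∧ wt i x = wt i y) := by
  refine ⟨fun h i hi => ⟨?_, wt_eq_of_act_eq hx hy h i⟩, fun h c hc =>
    act_eq_of_alphaV_eq_of_wt_eq hx hy (fun i hi => (h i hi).1) (fun i hi => (h i hi).2) hc⟩
  exact le_antisymm (alphaV_le_of_act_eq hy hx (fun c hc => (h c hc).symm) hi)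
    (alphaV_le_of_act_eq hx hy h hi)
end

section
/- As operators on partitions, the Knuth-type relations u_i u_{i+1} u_i = u_{i+1} u_i u_i and u_{i+1} u_i u_{i+1} = u_{i+1} u_{i+1} u_i hold for every i ∈ N (where juxtaposition denotes composition). -/
/-! On partitions, `u_j` adds a box to column `j` exactly when `j = 1` or column `j` is shorter
than column `j - 1`, so both relations become comparisons among the column lengths at `i - 1`, `i`,
`i + 1`. Right after `u_i` the operator `u_{i+1}` always applies, since column `i + 1` was no longer
than column `i`; and a box added in column `i + 1` does not affect whether `u_i` applies. Hence the
two sides of each relation add the same boxes and vanish under the same conditions. -/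

/-- `u_j` on column vectors, with the partition test reduced to a comparison of neighbouring columns;
for `j = 0` the test fails since `0 - 1 = 0`. -/
def addBox (j : ℕ) (c : ℕ → ℕ) : Option (ℕ → ℕ) :=
  if j = 1 ∨ c j < c (j - 1) then some (c + Pi.single j 1) else none

section addBox

variable {c : ℕ → ℕ} {j : ℕ}

lemma addBox_of_addable (h : j = 1 ∨ c j < c (j - 1)) : addBox j c = some (c + Pi.single j 1) :=
  if_pos h

lemma addBox_of_not_addable (h : ¬(j = 1 ∨ c j < c (j - 1))) : addBox j c = none :=
  if_neg h

lemma addBox_succ_of_lt (h : c (j + 1) < c j) : addBox (j + 1) c = some (c + Pi.single (j + 1) 1) :=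
  addBox_of_addable (Or.inr h)

lemma addBox_succ_of_le (hj : 1 ≤ j) (h : c j ≤ c (j + 1)) : addBox (j + 1) c = none :=
  addBox_of_not_addable (by simp; omega)

lemma addBox_add_single_of_ne {k : ℕ} (hk : k ≠ j) (hk' : k ≠ j - 1) :
    addBox j (c + Pi.single k 1) = (addBox j c).map (· + Pi.single k 1) := by
  simp only [addBox, Pi.add_apply, Pi.single_eq_of_ne' hk, Pi.single_eq_of_ne' hk', add_zero]
  split_ifs <;> simp [add_right_comm]

lemma addBox_succ_add_single (h : c (j + 1) ≤ c j) :
    addBox (j + 1) (c + Pi.single j 1) = some (c + Pi.single j 1 + Pi.single (j + 1) 1) :=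
  addBox_succ_of_lt (by simp; omega)

lemma addBox_knuth_left {i : ℕ} (hc : c (i + 1) ≤ c i) :
    ((addBox i c).bind (addBox (i + 1))).bind (addBox i) =
      ((addBox i c).bind (addBox i)).bind (addBox (i + 1)) := by
  by_cases hA : i = 1 ∨ c i < c (i - 1)
  · rw [addBox_of_addable hA, Option.bind_some, Option.bind_some, addBox_succ_add_single hc,
      Option.bind_some, addBox_add_single_of_ne (by omega) (by omega)]
    by_cases hB : i = 1 ∨ (c + Pi.single i 1 : ℕ → ℕ) i < (c + Pi.single i 1 : ℕ → ℕ) (i - 1)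
    · rw [addBox_of_addable hB, Option.map_some, Option.bind_some,
        addBox_succ_of_lt (by simp; omega)]
    · simp [addBox_of_not_addable hB]
  · simp [addBox_of_not_addable hA]

lemma addBox_knuth_right {i : ℕ} (hi : 1 ≤ i) (hc : c (i + 1) ≤ c i) :
    ((addBox (i + 1) c).bind (addBox i)).bind (addBox (i + 1)) =
      ((addBox i c).bind (addBox (i + 1))).bind (addBox (i + 1)) := by
  by_cases hC : c (i + 1) < c i
  · rw [addBox_succ_of_lt hC, Option.bind_some, addBox_add_single_of_ne (by omega) (by omega)]
    by_cases hA : i = 1 ∨ c i < c (i - 1)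
    · rw [addBox_of_addable hA, Option.map_some, Option.bind_some, Option.bind_some,
        addBox_succ_add_single hc, Option.bind_some]
    · simp [addBox_of_not_addable hA]
  · rw [addBox_succ_of_le hi (by omega), Option.bind_none, Option.bind_none]
    by_cases hA : i = 1 ∨ c i < c (i - 1)
    · rw [addBox_of_addable hA, Option.bind_some, addBox_succ_add_single hc, Option.bind_some,
        addBox_succ_of_le hi (by simp; omega)]
    · simp [addBox_of_not_addable hA]

end addBox

lemma update_succ_eq_add_single (c : ℕ → ℕ) (j : ℕ) :
    Function.update c j (c j + 1) = c + Pi.single j 1 := by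
  funext k
  rcases eq_or_ne k j with rfl | hk <;> simp [*]

lemma isPartition_add_single_iff {c : ℕ → ℕ} (hc : IsPartition c) {j : ℕ} (hj : 1 ≤ j) :
    IsPartition (c + Pi.single j 1) ↔ j = 1 ∨ c j < c (j - 1) := by
  obtain ⟨hmono, h0, N, hN⟩ := hc
  constructor
  · rintro ⟨hm, -, -⟩
    by_contra! h
    have := hm (j - 1) (by omega)
    simp [Nat.sub_add_cancel hj, show j - 1 ≠ j by omega] at this
    omega
  · intro h
    refine ⟨fun k hk => ?_, by simp [Pi.single_apply, h0]; omega, max N (j + 1), fun k hk => ?_⟩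
    · have := hmono k hk
      simp only [Pi.add_apply, Pi.single_apply]
      split_ifs <;> subst_vars <;> try simp only [Nat.add_sub_cancel] at h
      all_goals omega
    · simp [show k ≠ j by omega, hN k (le_of_max_le_left hk)]

lemma upFun_eq_addBox {c : ℕ → ℕ} (hc : IsPartition c) (j : ℕ) : upFun j c = addBox j c := by
  rcases Nat.eq_zero_or_pos j with rfl | hj
  · simp [upFun, addBox]
  · simp only [upFun, addBox, update_succ_eq_add_single, isPartition_add_single_iff hc hj,
      show 1 ≤ j from hj, true_and]

lemma isPartition_of_mem_U {j : ℕ} {o : Option (ℕ → ℕ)} {d : ℕ → ℕ} (hd : d ∈ U j o) :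
    IsPartition d := by
  obtain ⟨c, -, hcd⟩ := Option.mem_bind_iff.1 hd
  unfold upFun at hcd
  split_ifs at hcd with h
  · exact Option.some_injective _ hcd ▸ h.2
  · cases hcd

lemma U_some {c : ℕ → ℕ} (hc : IsPartition c) (j : ℕ) : U j (some c) = addBox j c :=
  upFun_eq_addBox hc j

lemma U_U (j k : ℕ) (o : Option (ℕ → ℕ)) : U j (U k o) = (U k o).bind (addBox j) := by
  cases h : U k o with
  | none => rfl
  | some d => exact U_some (isPartition_of_mem_U h) j

theorem knuth_relations_up (i : ℕ) (hi : 1 ≤ i) (c : ℕ → ℕ) (hc : IsPartition c) :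
    U i (U (i + 1) (U i (some c))) = U (i + 1) (U i (U i (some c))) ∧
    U (i + 1) (U i (U (i + 1) (some c))) = U (i + 1) (U (i + 1) (U i (some c))) := by
  simp only [↓U_U, U_some hc]
  exact ⟨addBox_knuth_left (hc.1 i hi), addBox_knuth_right hi (hc.1 i hi)⟩
end

section
/- As operators on partitions, d_i d_{i+1} d_i = d_i d_i d_{i+1} and d_{i+1} d_i d_{i+1} = d_i d_{i+1} d_{i+1} for every i ∈ N. -/
/-! On a partition `c` (column lengths) and for `i ≥ 1`, `d_i` is defined exactly when
`c (i + 1) < c i`, and then it subtracts the unit vector `Pi.single i 1`. Since truncated subtraction commutes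
(`tsub_right_comm`), both sides of each relation agree whenever both are defined, and tracking
the three column lengths `c i ≥ c (i + 1) ≥ c (i + 2)` through the three steps shows they are
defined under the same condition: `c (i + 2) < c (i + 1) < c i` for the first relation and
`c (i + 2) + 1 < c (i + 1)` for the second. -/

open Function

lemma update_self_sub_one_eq_sub_single (c : ℕ → ℕ) (i : ℕ) :
    update c i (c i - 1) = c - Pi.single i 1 := by
  funext j
  by_cases hj : j = i
  · subst hj; simp
  · simp [hj]

lemma IsPartition.sub_single {c : ℕ → ℕ} (hc : IsPartition c) {i : ℕ}
    (h : c (i + 1) < c i) : IsPartition (c - Pi.single i 1) := by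
  obtain ⟨hmono, h0, N, hN⟩ := hc
  refine ⟨fun j hj => ?_, by simp [h0], N, fun j hj => by simp [hN j hj]⟩
  have := hmono j hj
  grind [Pi.sub_apply]

lemma D_some_of_lt {c : ℕ → ℕ} (hc : IsPartition c) {i : ℕ} (hi : 1 ≤ i)
    (h : c (i + 1) < c i) : D i (some c) = some (c - Pi.single i 1) := by
  have hp := hc.sub_single h
  rw [← update_self_sub_one_eq_sub_single] at hp ⊢
  exact if_pos ⟨hi, by omega, hp⟩

lemma D_some_of_le {c : ℕ → ℕ} {i : ℕ} (h : c i ≤ c (i + 1)) : D i (some c) = none := by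
  simp only [D, Option.bind_some, downFun]
  refine if_neg fun ⟨hi, hci, hp⟩ => ?_
  have := hp.1 i hi
  simp only [update_self, ne_eq, Nat.succ_ne_self, not_false_eq_true, update_of_ne] at this
  omega

lemma D_none (i : ℕ) : D i none = none := rfl

lemma D_D_succ_D_eq_D_D_D_succ {c : ℕ → ℕ} (hc : IsPartition c) {i : ℕ} (hi : 1 ≤ i) :
    D i (D (i + 1) (D i (some c))) = D i (D i (D (i + 1) (some c))) := by
  have hi' : 1 ≤ i + 1 := by omega
  have hmono := hc.1 i hi
  rcases lt_or_ge (c (i + 1 + 1)) (c (i + 1)) with hbe | hbe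
  · have hc₂ := hc.sub_single hbe
    rw [D_some_of_lt hc hi' hbe, D_some_of_lt hc₂ hi (by grind [Pi.sub_apply])]
    rcases lt_or_ge (c (i + 1)) (c i) with hab' | hab'
    · have hc₁ := hc.sub_single hab'
      have hc₂₁ := hc₂.sub_single (i := i) (by grind [Pi.sub_apply])
      have hc₁₂ := hc₁.sub_single (i := i + 1) (by grind [Pi.sub_apply])
      rw [D_some_of_lt hc hi hab', D_some_of_lt hc₁ hi' (by grind [Pi.sub_apply]),
        D_some_of_lt hc₁₂ hi (by grind [Pi.sub_apply]),
        D_some_of_lt hc₂₁ hi (by grind [Pi.sub_apply]), tsub_right_comm (a := c)]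
    · rw [D_some_of_le hab', D_some_of_le (by grind [Pi.sub_apply])]
      rfl
  · rw [D_some_of_le hbe, D_none, D_none]
    rcases lt_or_ge (c (i + 1)) (c i) with hab' | hab'
    · rw [D_some_of_lt hc hi hab', D_some_of_le (by grind [Pi.sub_apply])]
      rfl
    · rw [D_some_of_le hab']
      rfl

lemma D_succ_D_D_succ_eq_D_D_succ_D_succ {c : ℕ → ℕ} (hc : IsPartition c) {i : ℕ}
    (hi : 1 ≤ i) :
    D (i + 1) (D i (D (i + 1) (some c))) = D i (D (i + 1) (D (i + 1) (some c))) := by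
  have hi' : 1 ≤ i + 1 := by omega
  have hmono := hc.1 i hi
  rcases lt_or_ge (c (i + 1 + 1)) (c (i + 1)) with hbe | hbe
  · have hc₂ := hc.sub_single hbe
    have hc₂₁ := hc₂.sub_single (i := i) (by grind [Pi.sub_apply])
    rw [D_some_of_lt hc hi' hbe, D_some_of_lt hc₂ hi (by grind [Pi.sub_apply])]
    rcases lt_or_ge (c (i + 1 + 1) + 1) (c (i + 1)) with hbe' | hbe'
    · have hc₂₂ := hc₂.sub_single (i := i + 1) (by grind [Pi.sub_apply])
      rw [D_some_of_lt hc₂₁ hi' (by grind [Pi.sub_apply]),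
        D_some_of_lt hc₂ hi' (by grind [Pi.sub_apply]),
        D_some_of_lt hc₂₂ hi (by grind [Pi.sub_apply]), tsub_right_comm (a := c - _)]
    · rw [D_some_of_le (by grind [Pi.sub_apply]),
        D_some_of_le (c := c - _) (by grind [Pi.sub_apply])]
      rfl
  · rw [D_some_of_le hbe]
    rfl

theorem knuth_relations_down (i : ℕ) (hi : 1 ≤ i) (c : ℕ → ℕ) (hc : IsPartition c) :
    D i (D (i + 1) (D i (some c))) = D i (D i (D (i + 1) (some c))) ∧
    D (i + 1) (D i (D (i + 1) (some c))) = D i (D (i + 1) (D (i + 1) (some c))) :=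
  ⟨D_D_succ_D_eq_D_D_D_succ hc hi, D_succ_D_D_succ_eq_D_D_succ_D_succ hc hi⟩
end

section
/- Fix t ∈ N with t > 1. As operators on partitions, for every i ≥ 0, u_t^{i+1} d_t^{i} = u_t^{i+1} d_t^{i+1} u_t and u_t^{i} d_t^{i+1} = d_t u_t^{i+1} d_t^{i+1}. -/
/-!
For `t ≥ 2` the operators `u_t` and `d_t` change only column `t`, and on the partitions
`update c t v` they move `v` up or down by one inside the interval `[c (t + 1), c (t - 1)]`
allowed by the neighbouring columns, giving `0` as soon as they would leave it.
Each side of either relation is therefore nonzero exactly when the walk it describes stays in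
that interval, and then both sides end at the same value of `v`.
-/

open Function

lemma isPartition_update_iff_s11 {c : ℕ → ℕ} (hc : IsPartition c) {t : ℕ} (ht : 1 < t) (v : ℕ) :
    IsPartition (update c t v) ↔ c (t + 1) ≤ v ∧ v ≤ c (t - 1) := by
  constructor
  · intro h
    have h₁ := h.1 t (by omega)
    have h₂ := h.1 (t - 1) (by omega)
    rw [Nat.sub_add_cancel (by omega)] at h₂
    rw [update_self, update_of_ne (by omega)] at h₁ h₂
    exact ⟨h₁, h₂⟩
  · rintro ⟨hlo, hhi⟩
    obtain ⟨hmono, hzero, N, hN⟩ := hc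
    refine ⟨fun j hj => ?_, by rwa [update_of_ne (by omega)], max N (t + 1), fun j hj => ?_⟩
    · rcases eq_or_ne (j + 1) t with rfl | hj₁
      · simpa [update_apply] using hhi
      rcases eq_or_ne j t with rfl | hj₂
      · simpa using hlo
      · rw [update_of_ne hj₁, update_of_ne hj₂]
        exact hmono j hj
    · rw [update_of_ne (by omega)]
      exact hN j (le_of_max_le_left hj)

lemma U_some_update {c : ℕ → ℕ} (hc : IsPartition c) {t : ℕ} (ht : 1 < t) {v : ℕ}
    (hv : c (t + 1) ≤ v) :
    U t (some (update c t v)) = if v < c (t - 1) then some (update c t (v + 1)) else none := by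
  have hcond : (1 ≤ t ∧ IsPartition (update c t (v + 1))) ↔ v < c (t - 1) := by
    rw [isPartition_update_iff_s11 hc ht]
    omega
  simp only [U, Option.bind_some, upFun, update_self, update_idem, hcond]

lemma D_some_update {c : ℕ → ℕ} (hc : IsPartition c) {t : ℕ} (ht : 1 < t) {v : ℕ}
    (hv : v ≤ c (t - 1)) :
    D t (some (update c t v)) = if c (t + 1) < v then some (update c t (v - 1)) else none := by
  have hcond : (1 ≤ t ∧ 1 ≤ v ∧ IsPartition (update c t (v - 1))) ↔ c (t + 1) < v := by
    rw [isPartition_update_iff_s11 hc ht]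
    omega
  simp only [D, Option.bind_some, downFun, update_self, update_idem, hcond]

lemma iterate_U_none (t k : ℕ) : (U t)^[k] none = none :=
  iterate_fixed rfl k

lemma iterate_D_none (t k : ℕ) : (D t)^[k] none = none :=
  iterate_fixed rfl k

lemma iterate_U_some_update {c : ℕ → ℕ} (hc : IsPartition c) {t : ℕ} (ht : 1 < t) {v : ℕ}
    (hlo : c (t + 1) ≤ v) (hhi : v ≤ c (t - 1)) (k : ℕ) :
    (U t)^[k] (some (update c t v)) =
      if v + k ≤ c (t - 1) then some (update c t (v + k)) else none := by
  induction k with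
  | zero => simpa using hhi
  | succ k ih =>
    rw [iterate_succ_apply', ih]
    split_ifs with hk hk'
    · rw [U_some_update hc ht (by omega), if_pos (by omega)]
      rfl
    · rw [U_some_update hc ht (by omega), if_neg (by omega)]
    · omega
    · rfl

lemma iterate_D_some_update {c : ℕ → ℕ} (hc : IsPartition c) {t : ℕ} (ht : 1 < t) {v : ℕ}
    (hlo : c (t + 1) ≤ v) (hhi : v ≤ c (t - 1)) (k : ℕ) :
    (D t)^[k] (some (update c t v)) =
      if c (t + 1) + k ≤ v then some (update c t (v - k)) else none := by
  induction k with
  | zero => simpa using hlo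
  | succ k ih =>
    rw [iterate_succ_apply', ih]
    split_ifs with hk hk'
    · rw [D_some_update hc ht (by omega), if_pos (by omega)]
      rfl
    · rw [D_some_update hc ht (by omega), if_neg (by omega)]
    · omega
    · rfl

lemma iterate_U_iterate_D_some_update {c : ℕ → ℕ} (hc : IsPartition c) {t : ℕ} (ht : 1 < t)
    {v : ℕ} (hlo : c (t + 1) ≤ v) (hhi : v ≤ c (t - 1)) (k m : ℕ) :
    (U t)^[m] ((D t)^[k] (some (update c t v))) =
      if c (t + 1) + k ≤ v ∧ v - k + m ≤ c (t - 1) then some (update c t (v - k + m))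
      else none := by
  rw [iterate_D_some_update hc ht hlo hhi]
  split_ifs with hk hkm hkm
  · rw [iterate_U_some_update hc ht (by omega) (by omega), if_pos hkm.2]
  · rw [iterate_U_some_update hc ht (by omega) (by omega), if_neg (by omega)]
  · exact absurd hkm.1 hk
  · exact iterate_U_none t m

theorem fixed_t_relations (t : ℕ) (ht : 1 < t) (i : ℕ)
    (c : ℕ → ℕ) (hc : IsPartition c) :
    (U t)^[i + 1] ((D t)^[i] (some c)) =
      (U t)^[i + 1] ((D t)^[i + 1] (U t (some c))) ∧
    (U t)^[i] ((D t)^[i + 1] (some c)) =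
      D t ((U t)^[i + 1] ((D t)^[i + 1] (some c))) := by
  have hlo : c (t + 1) ≤ c t := hc.1 t (by omega)
  have hhi : c t ≤ c (t - 1) := by
    simpa [Nat.sub_add_cancel (by omega : 1 ≤ t)] using hc.1 (t - 1) (by omega)
  rw [show some c = some (update c t (c t)) by rw [update_eq_self]]
  constructor
  · rw [iterate_U_iterate_D_some_update hc ht hlo hhi, U_some_update hc ht hlo]
    by_cases hup : c t < c (t - 1)
    · rw [if_pos hup, iterate_U_iterate_D_some_update hc ht (by omega) (by omega),
        show c t + 1 - (i + 1) = c t - i by omega]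
      simp only [show c (t + 1) + (i + 1) ≤ c t + 1 ↔ c (t + 1) + i ≤ c t by omega]
    · rw [if_neg hup, iterate_D_none, iterate_U_none, if_neg (by omega)]
  · rw [iterate_U_iterate_D_some_update hc ht hlo hhi,
      iterate_U_iterate_D_some_update hc ht hlo hhi]
    by_cases hdown : c (t + 1) + (i + 1) ≤ c t
    · rw [if_pos ⟨hdown, by omega⟩, if_pos ⟨hdown, by omega⟩, D_some_update hc ht (by omega),
        if_pos (by omega)]
      rfl
    · rw [if_neg (by omega), if_neg (by omega)]
      rfl
end

section
/- As operators on partitions, for every m, n ∈ N: u_n^m u_{n-1}^m ⋯ u_1^m = (u_n u_{n-1} ⋯ u_1)^m, i.e., applying the composite u_n⋯u_1 m times equals applying u_1 m times, then u_2 m times, ..., then u_n m times. -/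
/-! Adding `m` boxes to column `i ≥ 1` of a partition keeps it a partition as long as column
`i - 1` stays at least as long, and then `u_i^m` does exactly that. Applying `u_1^m`, then
`u_2^m`, …, then `u_n^m` therefore never gives `0`, because column `i - 1` has just been
lengthened by `m` when column `i` is filled: the result is `c` with `m` boxes added to each of
the columns `1, …, n`. For `m = 1` this says that `u_n ⋯ u_1` adds one box to each of these
columns, so its `m`-th power yields the same partition. -/

def addToColumns (m n : ℕ) (c : ℕ → ℕ) : ℕ → ℕ :=
  fun i => if 1 ≤ i ∧ i ≤ n then c i + m else c i

section addToColumns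

variable (m n : ℕ) (c : ℕ → ℕ)

@[simp]
lemma addToColumns_zero_right : addToColumns m 0 c = c := by
  funext i; unfold addToColumns; split_ifs <;> omega

@[simp]
lemma addToColumns_zero_left : addToColumns 0 n c = c := by
  funext i; unfold addToColumns; split_ifs <;> omega

lemma addToColumns_succ_right :
    addToColumns m (n + 1) c =
      Function.update (addToColumns m n c) (n + 1) (addToColumns m n c (n + 1) + m) := by
  funext j
  rcases eq_or_ne j (n + 1) with rfl | hj
  · rw [Function.update_self]; unfold addToColumns; split_ifs <;> omega
  · rw [Function.update_of_ne hj]; unfold addToColumns; split_ifs <;> omega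

lemma addToColumns_addToColumns_one :
    addToColumns 1 n (addToColumns m n c) = addToColumns (m + 1) n c := by
  funext i; unfold addToColumns; split_ifs <;> omega

end addToColumns

namespace IsPartition

variable {c : ℕ → ℕ}

lemma addToColumns (hc : IsPartition c) (m n : ℕ) : IsPartition (addToColumns m n c) := by
  obtain ⟨hmono, hzero, N, hN⟩ := hc
  refine ⟨fun i hi => ?_, ?_, max N (n + 1), fun i hi => ?_⟩
  · have := hmono i hi
    unfold _root_.addToColumns; split_ifs <;> omega
  · unfold _root_.addToColumns; split_ifs <;> omega
  · have := hN i (le_of_max_le_left hi)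
    have := le_of_max_le_right hi
    unfold _root_.addToColumns; split_ifs <;> omega

lemma update_add (hc : IsPartition c) {i t : ℕ} (hi : 1 ≤ i)
    (ht : 1 < i → c i + t ≤ c (i - 1)) :
    IsPartition (Function.update c i (c i + t)) := by
  obtain ⟨hmono, hzero, N, hN⟩ := hc
  refine ⟨fun j hj => ?_, ?_, max N (i + 1), fun j hj => ?_⟩
  · have := hmono j hj
    rcases eq_or_ne (j + 1) i with rfl | hj1
    · simpa using ht (by omega)
    · rcases eq_or_ne j i with rfl | hji
      · simp; omega
      · simpa [Function.update_of_ne hj1, Function.update_of_ne hji]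
  · rw [Function.update_of_ne (by omega)]; exact hzero
  · rw [Function.update_of_ne (by have := le_of_max_le_right hj; omega)]
    exact hN j (le_of_max_le_left hj)

end IsPartition

lemma upFun_eq_some {c : ℕ → ℕ} (hc : IsPartition c) {i : ℕ} (hi : 1 ≤ i)
    (hfit : 1 < i → c i + 1 ≤ c (i - 1)) :
    upFun i c = some (Function.update c i (c i + 1)) :=
  if_pos ⟨hi, hc.update_add hi hfit⟩

lemma act_up_cons (i : ℕ) (x : List Γ) (o : Option (ℕ → ℕ)) :
    act ((false, i) :: x) o = U i (act x o) := rfl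

lemma act_append (x y : List Γ) (o : Option (ℕ → ℕ)) :
    act (x ++ y) o = act x (act y o) :=
  List.foldr_append

lemma act_replicate_up {c : ℕ → ℕ} (hc : IsPartition c) {i : ℕ} (hi : 1 ≤ i) {m : ℕ}
    (hfit : 1 < i → c i + m ≤ c (i - 1)) :
    act (List.replicate m ((false, i) : Γ)) (some c) =
      some (Function.update c i (c i + m)) := by
  induction m with
  | zero => simp [act]
  | succ k ih =>
    have hfit' : 1 < i → c i + k ≤ c (i - 1) := fun h => by have := hfit h; omega
    have hfit_next : 1 < i → Function.update c i (c i + k) i + 1 ≤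
        Function.update c i (c i + k) (i - 1) := by
      intro h
      rw [Function.update_self, Function.update_of_ne (by omega)]
      have := hfit h; omega
    rw [List.replicate_succ, act_up_cons, ih hfit', U, Option.bind_some,
      upFun_eq_some (hc.update_add hi hfit') hi hfit_next, Function.update_self,
      Function.update_idem, Nat.add_assoc]

lemma act_flatten_replicate {c : ℕ → ℕ} (hc : IsPartition c) (m n : ℕ) :
    act (((List.range n).reverse.map
      (fun k => List.replicate m ((false, k + 1) : Γ))).flatten) (some c) =
      some (addToColumns m n c) := by
  induction n with
  | zero => simp [act]
  | succ k ih =>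
    have hfit : 1 < k + 1 → addToColumns m k c (k + 1) + m ≤ addToColumns m k c (k + 1 - 1) := by
      intro h
      have := hc.1 k (by omega)
      simp only [Nat.add_sub_cancel]
      unfold addToColumns; split_ifs <;> omega
    simp only [List.range_succ, List.reverse_append, List.reverse_singleton, List.singleton_append,
      List.map_cons, List.flatten_cons]
    rw [act_append, ih, act_replicate_up (hc.addToColumns m k) (by omega) hfit,
      addToColumns_succ_right]

lemma act_chain {c : ℕ → ℕ} (hc : IsPartition c) (n : ℕ) :
    act ((List.range n).reverse.map (fun k => ((false, k + 1) : Γ))) (some c) =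
      some (addToColumns 1 n c) := by
  rw [List.map_eq_flatMap, List.flatMap_def]
  exact act_flatten_replicate hc 1 n

lemma iterate_act_chain {c : ℕ → ℕ} (hc : IsPartition c) (n m : ℕ) :
    (fun o => act ((List.range n).reverse.map (fun k => ((false, k + 1) : Γ))) o)^[m] (some c) =
      some (addToColumns m n c) := by
  induction m with
  | zero => simp
  | succ k ih =>
    rw [Function.iterate_succ_apply', ih, act_chain (hc.addToColumns k n),
      addToColumns_addToColumns_one]

theorem powers_of_chain_general (m n : ℕ)
    (c : ℕ → ℕ) (hc : IsPartition c) :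
    act (((List.range n).reverse.map
        (fun k => List.replicate m ((false, k + 1) : Γ))).flatten) (some c) =
    (fun o => act ((List.range n).reverse.map (fun k => ((false, k + 1) : Γ))) o)^[m]
      (some c) := by
  rw [act_flatten_replicate hc, iterate_act_chain hc]

theorem powers_of_chain (m n : ℕ) (hm : 1 ≤ m) (hn : 1 ≤ n)
    (c : ℕ → ℕ) (hc : IsPartition c) :
    act (((List.range n).reverse.map
        (fun k => List.replicate m ((false, k + 1) : Γ))).flatten) (some c) =
    (fun o => act ((List.range n).reverse.map (fun k => ((false, k + 1) : Γ))) o)^[m]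
      (some c) :=
  powers_of_chain_general m n c hc
end
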